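/- Let S be a grope frame, m < n, and A, B ∈ W(E_n) non-empty reduced words such that ABA⁻B⁻ ≠ e in F_n and both AB and A⁻B⁻ are reduced words. Then: (1.1) if B ≡ B₀A, then B₀ is non-empty, AB₀ and A⁻B₀⁻ are reduced words, AB₀A⁻B₀⁻ = ABA⁻B⁻ in F_n, and if in addition AB₀, A⁻B₀⁻ ∈ F_m then AB, A⁻B⁻ ∈ F_m; (1.2) if A ≡ A₀B, then A₀ is non-empty, A₀B and A₀⁻B⁻ are reduced words, A₀BA₀⁻B⁻ = ABA⁻B⁻ in F_n, and if in addition A₀B, A₀⁻B⁻ ∈ F_m then AB, A⁻B⁻ ∈ F_m; (1.3) if A ≡ A₀Z and B ≡ B₀Z for non-empty words A₀, B₀ and B₀A₀⁻ is reduced, then A₀ZB₀A₀⁻Z⁻B₀⁻ is reduced, A₀ZB₀A₀⁻Z⁻B₀⁻ = ABA⁻B⁻ in F_n, and if in addition A₀, B₀, Z ∈ F_m then AB, A⁻B⁻ ∈ F_m. -/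

import Mathlib

/-! Basic definitions for grope groups, following Cencelj–Eda–Vavpetič,
"Rigidity of the minimal grope group". -/

/-- A *grope frame* is a set `S` of finite sequences of natural numbers containing the
empty sequence and such that for every `s ∈ S` there is `n > 0` with
`{i | s ++ [i] ∈ S} = {0, …, 2n - 1}`. -/
structure GropeFrame where
  S : Set (List ℕ)
  nil_mem : [] ∈ S
  branch : ∀ s ∈ S, ∃ n : ℕ, 0 < n ∧ {i : ℕ | s ++ [i] ∈ S} = Set.Iio (2 * n)

namespace GropeFrame

/-- The number of children of a sequence `s` in the frame. -/
noncomputable def deg (G : GropeFrame) (s : List ℕ) : ℕ :=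
  sInf {i : ℕ | s ++ [i] ∉ G.S}

theorem deg_eq (G : GropeFrame) {s : List ℕ} {n : ℕ}
    (hn : {i : ℕ | s ++ [i] ∈ G.S} = Set.Iio (2 * n)) : G.deg s = 2 * n := by
  have hc : {i : ℕ | s ++ [i] ∉ G.S} = Set.Ici (2 * n) := by
    ext i
    have h := Set.ext_iff.1 hn i
    simp only [Set.mem_setOf_eq, Set.mem_Iio] at h
    simp [Set.mem_Ici, h, not_lt]
  rw [deg, hc, csInf_Ici]

theorem mem_of_lt_deg (G : GropeFrame) {s : List ℕ} (hs : s ∈ G.S) {i : ℕ}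
    (hi : i < G.deg s) : s ++ [i] ∈ G.S := by
  obtain ⟨n, -, hn⟩ := G.branch s hs
  rw [G.deg_eq hn] at hi
  exact (Set.ext_iff.1 hn i).2 hi

/-- `s` is binary branched in the frame `G` if its set of children indices is `{0, 1}`. -/
def BinaryBranched (G : GropeFrame) (s : List ℕ) : Prop :=
  {i : ℕ | s ++ [i] ∈ G.S} = {0, 1}

end GropeFrame

/-- The set `E_m` of free generators `c_s`, `s ∈ S`, `lh s = m`, of the free group `F_m`. -/
abbrev GropeGen (G : GropeFrame) (m : ℕ) : Type :=
  {s : List ℕ // s ∈ G.S ∧ s.length = m}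

/-- The generator `c_{s i}` obtained by appending `i` to `s`. -/
def gropeChild {G : GropeFrame} {m : ℕ} (x : GropeGen G m) (i : ℕ)
    (hi : i < G.deg x.1) : GropeGen G (m + 1) :=
  ⟨x.1 ++ [i], ⟨G.mem_of_lt_deg x.2.1 hi, by simp [x.2.2]⟩⟩

open scoped commutatorElement

/-- The bonding homomorphism `e_m : F_m → F_{m+1}`, sending `c_s` to
`[c_{s0}, c_{s1}] ⋯ [c_{s(2k-2)}, c_{s(2k-1)}]`. -/
noncomputable def gropeE (G : GropeFrame) (m : ℕ) :
    FreeGroup (GropeGen G m) →* FreeGroup (GropeGen G (m + 1)) :=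
  FreeGroup.lift fun x =>
    (List.ofFn fun j : Fin (G.deg x.1 / 2) =>
      ⁅FreeGroup.of (gropeChild x (2 * (j : ℕ)) (by have := j.isLt; omega)),
        FreeGroup.of (gropeChild x (2 * (j : ℕ) + 1) (by have := j.isLt; omega))⁆).prod

/-- The composite `e_{m,n} = e_{n-1} ∘ ⋯ ∘ e_m : F_m → F_n`. -/
noncomputable def gropeEle (G : GropeFrame) {m n : ℕ} (h : m ≤ n)
    (x : FreeGroup (GropeGen G m)) : FreeGroup (GropeGen G n) :=
  Nat.leRecOn (C := fun k => FreeGroup (GropeGen G k)) h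
    (fun {k} y => gropeE G k y) x

/-- For `v ∈ F_n`, `MemF G m v` says that `v` lies in (the image of) `F_m`,
i.e. in the image of `e_{m,n}`. -/
def MemF (G : GropeFrame) (m : ℕ) {n : ℕ} (v : FreeGroup (GropeGen G n)) : Prop :=
  ∃ (h : m ≤ n) (x : FreeGroup (GropeGen G m)), gropeEle G h x = v

/-- The formal inverse `W⁻` of a word. -/
def wordInv {α : Type*} (w : List (α × Bool)) : List (α × Bool) :=
  (w.map fun p => (p.1, !p.2)).reverse

/-- A word is reduced if no letter is adjacent to its formal inverse. -/
def IsReducedWord {α : Type*} (w : List (α × Bool)) : Prop :=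
  w.Chain' fun a b => ¬(a.1 = b.1 ∧ b.2 = !a.2)

/-- A word is cyclically reduced if it is reduced and moreover its first and last letters
are not mutually inverse. -/
def IsCyclicallyReducedWord {α : Type*} (w : List (α × Bool)) : Prop :=
  IsReducedWord w ∧ ∀ a b : α × Bool, w.getLast? = some a → w.head? = some b →
    ¬(a.1 = b.1 ∧ b.2 = !a.2)

/-- Expansion of a single letter: `c_t` is replaced by
`c_{t0} c_{t1} c_{t0}⁻ c_{t1}⁻ ⋯ c_{t(2k-2)} c_{t(2k-1)} c_{t(2k-2)}⁻ c_{t(2k-1)}⁻` and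
`c_t⁻` by the formal inverse of this word. -/
noncomputable def letterExp (G : GropeFrame) {m : ℕ} (a : GropeGen G m × Bool) :
    List (GropeGen G (m + 1) × Bool) :=
  let P : List (GropeGen G (m + 1) × Bool) :=
    (List.ofFn fun j : Fin (G.deg a.1.1 / 2) =>
      [(gropeChild a.1 (2 * (j : ℕ)) (by have := j.isLt; omega), true),
       (gropeChild a.1 (2 * (j : ℕ) + 1) (by have := j.isLt; omega), true),
       (gropeChild a.1 (2 * (j : ℕ)) (by have := j.isLt; omega), false),
       (gropeChild a.1 (2 * (j : ℕ) + 1) (by have := j.isLt; omega), false)]).flatten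
  if a.2 then P else wordInv P

/-- The word `e_{m,n}[W]` obtained from `W ∈ W(E_m)` by iterated letter expansion. -/
noncomputable def wordExp (G : GropeFrame) {m n : ℕ} (h : m ≤ n)
    (w : List (GropeGen G m × Bool)) : List (GropeGen G n × Bool) :=
  Nat.leRecOn (C := fun k => List (GropeGen G k × Bool)) h
    (fun {k} v => (v.map (letterExp G)).flatten) w

/-- `IsSmall G hmn W V` : the subword `V` of the reduced word `W ∈ W(E_n)` (where
`W ∈ F_m`, with `W ≡ e_{m,n}[W₀]`) is *small*, i.e. there are a letter `c` occurring in
`W₀` and `i ∈ ℕ` such that `V` is a subword of `e_{m+1,n}[c_{si}]` (resp. of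
`e_{m+1,n}[c_{si}⁻]` when the occurring letter is negative). -/
def IsSmall (G : GropeFrame) {m n : ℕ} (hmn : m < n)
    (W V : List (GropeGen G n × Bool)) : Prop :=
  ∃ W₀ : List (GropeGen G m × Bool), wordExp G hmn.le W₀ = W ∧
    ∃ c ∈ W₀, ∃ (i : ℕ) (hi : i < G.deg c.1.1),
      V <:+: wordExp G (Nat.succ_le_of_lt hmn) [(gropeChild c.1 i hi, c.2)]

/-!
The identities and the reducedness claims in (1.1)–(1.3) are computations in the free group and
gluing of reduced words along a non-empty overlap. What needs an argument is the membership claim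
in (1.1) and (1.2), which both follow from: if `X`, `Y` are non-empty and `XY`, `YX` are reduced
words lying in `F_m`, then `X` and `Y` lie in `F_m`.

Expanding a reduced word creates no cancellation, so a reduced word lying in `F_m` is literally an
expansion `e_{m,n}[W]`. Going down one level at a time, it then suffices that a cut of `e_k[U]` at
which some expansion `e_k[V]` can start falls between two letter expansions. The expansion of a
letter `c_t^±` is the product of the commutators `c_{ti} c_{tj} c_{ti}⁻ c_{tj}⁻` with the children
of `t` read forwards or backwards according to the sign; as `deg t` is even, an interior position
never reads like the first two letters of an expansion. The first letter of an expansion also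
determines the expanded letter, so `e_k` is injective on words and the cuts of `e_k[U]` and
`e_k[U']` come from the same splitting one level down.
-/

open FreeGroup (mk of invRev mul_mk inv_mk)

section Words

variable {α : Type*}

theorem wordInv_eq_invRev (w : List (α × Bool)) : wordInv w = invRev w := rfl

theorem isReducedWord_iff_isReduced {w : List (α × Bool)} :
    IsReducedWord w ↔ FreeGroup.IsReduced w := by
  have hrel : (fun a b : α × Bool => ¬(a.1 = b.1 ∧ b.2 = !a.2)) =
      fun a b => a.1 = b.1 → a.2 = b.2 := by
    funext a b
    cases a.2 <;> cases b.2 <;> simp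
  rw [IsReducedWord, FreeGroup.IsReduced, hrel]; rfl

theorem FreeGroup.IsReduced.invRev {w : List (α × Bool)} (h : FreeGroup.IsReduced w) :
    FreeGroup.IsReduced (invRev w) := by
  rw [FreeGroup.IsReduced, FreeGroup.invRev, List.isChain_reverse, List.isChain_map]
  exact h.imp fun a b hab hba => by simpa using (hab hba.symm).symm

theorem FreeGroup.isReduced_invRev_iff {w : List (α × Bool)} :
    FreeGroup.IsReduced (invRev w) ↔ FreeGroup.IsReduced w :=
  ⟨fun h => invRev_invRev (L₁ := w) ▸ h.invRev, IsReduced.invRev⟩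

theorem FreeGroup.mk_flatten (L : List (List (α × Bool))) : mk L.flatten = (L.map mk).prod := by
  induction L with
  | nil => rfl
  | cons l L ih => rw [List.flatten_cons, ← mul_mk, ih, List.map_cons, List.prod_cons]

theorem mk_commutatorWord (X Y : List (α × Bool)) :
    mk (X ++ Y ++ invRev X ++ invRev Y) = ⁅mk X, mk Y⁆ := by
  simp only [← mul_mk, ← inv_mk, commutatorElement_def]

theorem isReduced_commutatorWord_of_common_suffix {A₀ B₀ Z : List (α × Bool)}
    (h₁ : FreeGroup.IsReduced (A₀ ++ Z ++ (B₀ ++ Z)))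
    (h₂ : FreeGroup.IsReduced (invRev (A₀ ++ Z) ++ invRev (B₀ ++ Z)))
    (h₃ : FreeGroup.IsReduced (B₀ ++ invRev A₀)) (hA₀ : A₀ ≠ []) (hB₀ : B₀ ≠ []) :
    FreeGroup.IsReduced (A₀ ++ Z ++ B₀ ++ invRev A₀ ++ invRev Z ++ invRev B₀) := by
  have hleft : FreeGroup.IsReduced (A₀ ++ Z ++ B₀ ++ invRev A₀) :=
    (h₁.infix ⟨[], Z, by simp⟩).append_overlap h₃ hB₀
  have hright : FreeGroup.IsReduced (invRev A₀ ++ (invRev Z ++ invRev B₀)) :=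
    h₂.infix ⟨invRev Z, [], by simp [FreeGroup.invRev_append]⟩
  simpa using hleft.append_overlap hright (FreeGroup.invRev_injective.ne hA₀)

/-- The word `[f 0, f 1] [f 2, f 3] ⋯ [f (2k-2), f (2k-1)]`, commutators written out letter by
letter. -/
def commWord (f : ℕ → α) (k : ℕ) : List (α × Bool) :=
  List.ofFn fun p : Fin (4 * k) => (f (2 * (p.1 / 4) + p.1 % 2), decide (p.1 % 4 < 2))

theorem commWord_eq_flatten (f : ℕ → α) (k : ℕ) :
    commWord f k = (List.ofFn fun j : Fin k => [(f (2 * j), true), (f (2 * j + 1), true),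
      (f (2 * j), false), (f (2 * j + 1), false)]).flatten := by
  rw [commWord, List.ofFn_mul']
  congr 2
  funext j
  simp only [List.ofFn_succ, Fin.val_succ, List.ofFn_zero, List.cons.injEq, Prod.mk.injEq]
  refine ⟨⟨congrArg f ?_, ?_⟩, ⟨congrArg f ?_, ?_⟩, ⟨congrArg f ?_, ?_⟩, ⟨congrArg f ?_, ?_⟩,
    trivial⟩ <;> simp <;> omega

@[simp] theorem length_commWord (f : ℕ → α) (k : ℕ) : (commWord f k).length = 4 * k := by
  simp [commWord]

theorem getElem?_commWord (f : ℕ → α) {k p : ℕ} (hp : p < 4 * k) :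
    (commWord f k)[p]? = some (f (2 * (p / 4) + p % 2), decide (p % 4 < 2)) := by
  simp [commWord, hp]

theorem invRev_commWord (f : ℕ → α) (k : ℕ) :
    invRev (commWord f k) = commWord (fun i => f (2 * k - 1 - i)) k := by
  refine List.ext_getElem? fun p => ?_
  by_cases hp : p < 4 * k
  · rw [getElem?_commWord _ hp, invRev, List.getElem?_reverse (by simpa), List.getElem?_map,
      List.length_map, length_commWord, getElem?_commWord _ (by omega)]
    simp only [Option.map_some, Option.some.injEq, Prod.mk.injEq]
    constructor
    · congr 1; omega
    · rw [← decide_not]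
      exact decide_eq_decide.mpr (by omega)
  · rw [List.getElem?_eq_none (by simpa [invRev] using hp),
      List.getElem?_eq_none (by simpa using hp)]

theorem isReduced_commWord {f : ℕ → α} {k : ℕ}
    (hf : ∀ i, i + 1 < 2 * k → f i ≠ f (i + 1)) : FreeGroup.IsReduced (commWord f k) := by
  rw [FreeGroup.IsReduced, List.isChain_iff_getElem]
  intro p hp
  simp only [length_commWord] at hp
  simp only [commWord, List.getElem_ofFn]
  intro heq
  rcases (by omega : p % 4 = 0 ∨ p % 4 = 1 ∨ p % 4 = 2 ∨ p % 4 = 3) with h | h | h | h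
  · simp; omega
  · exact absurd (heq.symm.trans (congrArg f (by omega))) (hf _ (by omega))
  · simp; omega
  · exact absurd (heq.trans (congrArg f (by omega))) (hf _ (by omega))

end Words

theorem GropeFrame.exists_deg_eq_two_mul (G : GropeFrame) {s : List ℕ} (hs : s ∈ G.S) :
    ∃ k, 0 < k ∧ G.deg s = 2 * k := by
  obtain ⟨k, hk, hset⟩ := G.branch s hs
  exact ⟨k, hk, G.deg_eq hset⟩

theorem GropeFrame.deg_pos (G : GropeFrame) {s : List ℕ} (hs : s ∈ G.S) : 0 < G.deg s := by
  obtain ⟨k, hk, hd⟩ := G.exists_deg_eq_two_mul hs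
  omega

section Expansion

variable {G : GropeFrame} {m : ℕ}

/-- `gropeChild` made total by the junk value `c_{x0}` for `i ≥ deg x`. -/
noncomputable def gropeChildD (x : GropeGen G m) (i : ℕ) : GropeGen G (m + 1) :=
  if h : i < G.deg x.1 then gropeChild x i h
  else gropeChild x 0 (G.deg_pos x.2.1)

theorem gropeChildD_of_lt (x : GropeGen G m) {i : ℕ} (hi : i < G.deg x.1) :
    gropeChildD x i = gropeChild x i hi := dif_pos hi

theorem eq_of_gropeChildD_eq {x y : GropeGen G m} {i j : ℕ} (hi : i < G.deg x.1)
    (hj : j < G.deg y.1) (h : gropeChildD x i = gropeChildD y j) : x = y ∧ i = j := by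
  rw [gropeChildD_of_lt x hi, gropeChildD_of_lt y hj] at h
  have hlen : x.1.length = y.1.length := by rw [x.2.2, y.2.2]
  obtain ⟨hxy, hij⟩ := List.append_inj (congrArg Subtype.val h) hlen
  exact ⟨Subtype.ext hxy, by simpa using hij⟩

noncomputable def letterGen (a : GropeGen G m × Bool) (i : ℕ) : GropeGen G (m + 1) :=
  gropeChildD a.1 (if a.2 then i else G.deg a.1.1 - 1 - i)

theorem letterExp_true_eq_commWord (c : GropeGen G m) :
    letterExp G (c, true) = commWord (gropeChildD c) (G.deg c.1 / 2) := by
  rw [commWord_eq_flatten]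
  refine congrArg List.flatten (congrArg List.ofFn (funext fun j => ?_))
  have hj : (j : ℕ) < G.deg c.1 / 2 := j.2
  rw [gropeChildD_of_lt c (by omega : 2 * (j : ℕ) < G.deg c.1),
    gropeChildD_of_lt c (by omega : 2 * (j : ℕ) + 1 < G.deg c.1)]

theorem letterExp_eq_commWord (a : GropeGen G m × Bool) :
    letterExp G a = commWord (letterGen a) (G.deg a.1.1 / 2) := by
  obtain ⟨c, _ | _⟩ := a
  · obtain ⟨k, -, hk⟩ := G.exists_deg_eq_two_mul c.2.1
    rw [show letterExp G (c, false) = invRev (letterExp G (c, true)) from rfl,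
      letterExp_true_eq_commWord, invRev_commWord]
    congr 1
    funext i
    simp only [letterGen, Bool.false_eq_true, if_false]
    congr 1
    omega
  · rw [letterExp_true_eq_commWord]
    rfl

theorem eq_of_letterGen_eq {a b : GropeGen G m × Bool} {i j : ℕ} (hi : i < G.deg a.1.1)
    (hj : j < G.deg b.1.1) (hij : i % 2 = j % 2) (h : letterGen a i = letterGen b j) :
    a = b ∧ i = j := by
  obtain ⟨c, s⟩ := a
  obtain ⟨d, t⟩ := b
  unfold letterGen at h
  dsimp only at hi hj h
  obtain ⟨k, -, hk⟩ := G.exists_deg_eq_two_mul c.2.1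
  obtain ⟨rfl, hidx⟩ := eq_of_gropeChildD_eq (by split <;> omega) (by split <;> omega) h
  -- `deg` is even, so reading the children backwards flips the parity of the index
  cases s <;> cases t <;> simp at hidx ⊢ <;> omega

theorem letterGen_ne_letterGen_succ (a : GropeGen G m × Bool) {i : ℕ}
    (hi : i + 1 < G.deg a.1.1) : letterGen a i ≠ letterGen a (i + 1) := fun h => by
  obtain ⟨-, hidx⟩ := eq_of_gropeChildD_eq (by split <;> omega) (by split <;> omega) h
  split at hidx <;> omega

theorem length_letterExp (a : GropeGen G m × Bool) :
    (letterExp G a).length = 2 * G.deg a.1.1 := by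
  obtain ⟨k, -, hk⟩ := G.exists_deg_eq_two_mul a.1.2.1
  rw [letterExp_eq_commWord, length_commWord]
  omega

theorem getElem?_letterExp (a : GropeGen G m × Bool) {p : ℕ} (hp : p < 2 * G.deg a.1.1) :
    (letterExp G a)[p]? = some (letterGen a (2 * (p / 4) + p % 2), decide (p % 4 < 2)) := by
  obtain ⟨k, -, hk⟩ := G.exists_deg_eq_two_mul a.1.2.1
  rw [letterExp_eq_commWord, getElem?_commWord _ (by omega)]

theorem head?_letterExp (a : GropeGen G m × Bool) :
    (letterExp G a).head? = some (letterGen a 0, true) := by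
  obtain ⟨k, hk0, hk⟩ := G.exists_deg_eq_two_mul a.1.2.1
  rw [List.head?_eq_getElem?, getElem?_letterExp a (by omega)]
  rfl

theorem getLast?_letterExp (a : GropeGen G m × Bool) :
    (letterExp G a).getLast? = some (letterGen (a.1, !a.2) 0, false) := by
  obtain ⟨k, hk0, hk⟩ := G.exists_deg_eq_two_mul a.1.2.1
  rw [List.getLast?_eq_getElem?, length_letterExp, getElem?_letterExp a (by omega)]
  simp only [Option.some.injEq, Prod.mk.injEq, decide_eq_false_iff_not]
  refine ⟨congrArg (gropeChildD a.1) ?_, by omega⟩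
  cases a.2 <;> simp <;> omega

theorem letterExp_ne_nil (a : GropeGen G m × Bool) : letterExp G a ≠ [] := by
  simp [← List.head?_eq_none_iff, head?_letterExp]

theorem isReduced_letterExp (a : GropeGen G m × Bool) : FreeGroup.IsReduced (letterExp G a) := by
  rw [letterExp_eq_commWord]
  exact isReduced_commWord fun i hi => letterGen_ne_letterGen_succ a (by omega)

noncomputable def wordExpStep (G : GropeFrame) {m : ℕ} (w : List (GropeGen G m × Bool)) :
    List (GropeGen G (m + 1) × Bool) :=
  (w.map (letterExp G)).flatten

@[simp] theorem wordExpStep_nil : wordExpStep G ([] : List (GropeGen G m × Bool)) = [] := rfl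

theorem wordExpStep_cons (a : GropeGen G m × Bool) (w : List (GropeGen G m × Bool)) :
    wordExpStep G (a :: w) = letterExp G a ++ wordExpStep G w := rfl

theorem isReduced_wordExpStep {w : List (GropeGen G m × Bool)} (hw : FreeGroup.IsReduced w) :
    FreeGroup.IsReduced (wordExpStep G w) := by
  rw [_root_.wordExpStep, FreeGroup.IsReduced,
    List.isChain_flatten (by simpa using fun a _ => (letterExp_ne_nil a).symm), List.isChain_map]
  refine ⟨?_, hw.imp fun a b hab => ?_⟩
  · simp only [List.mem_map]
    rintro _ ⟨a, -, rfl⟩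
    exact isReduced_letterExp a
  rw [getLast?_letterExp, head?_letterExp]
  rintro _ ⟨⟩ _ ⟨⟩ hgen
  obtain ⟨rfl, -⟩ := eq_of_letterGen_eq (a := (a.1, !a.2)) (G.deg_pos a.1.2.1)
    (G.deg_pos b.1.2.1) rfl hgen
  simpa using hab rfl

theorem letterExp_append_inj {a b : GropeGen G m × Bool} {R R' : List (GropeGen G (m + 1) × Bool)}
    (h : letterExp G a ++ R = letterExp G b ++ R') : a = b ∧ R = R' := by
  have hhead := congrArg List.head? h
  rw [List.head?_append_of_ne_nil _ (letterExp_ne_nil a),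
    List.head?_append_of_ne_nil _ (letterExp_ne_nil b), head?_letterExp, head?_letterExp] at hhead
  obtain ⟨rfl, -⟩ := eq_of_letterGen_eq (G.deg_pos a.1.2.1) (G.deg_pos b.1.2.1) rfl
    (by simpa using hhead)
  exact ⟨rfl, List.append_cancel_left h⟩

theorem wordExpStep_injective : Function.Injective (wordExpStep G (m := m)) := by
  intro w
  induction w with
  | nil =>
    rintro (_ | ⟨b, v⟩) h
    · rfl
    · exact absurd h.symm (by simp [wordExpStep_cons, letterExp_ne_nil])
  | cons a w ih =>
    rintro (_ | ⟨b, v⟩) h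
    · exact absurd h (by simp [wordExpStep_cons, letterExp_ne_nil])
    · obtain ⟨rfl, hwv⟩ := letterExp_append_inj h
      rw [ih hwv]

theorem append_ne_letterExp_append {u v : GropeGen G m × Bool}
    {P S R R' : List (GropeGen G (m + 1) × Bool)} (hu : letterExp G u = P ++ S) (hP : P ≠ [])
    (hS : S ≠ []) : S ++ R ≠ letterExp G v ++ R' := by
  intro h
  obtain ⟨k, -, hk⟩ := G.exists_deg_eq_two_mul u.1.2.1
  have hlen : P.length + S.length = 4 * k := by
    rw [← List.length_append, ← hu, length_letterExp, hk]
    ring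
  have hP0 : 0 < P.length := List.length_pos_iff.2 hP
  have hS0 : 0 < S.length := List.length_pos_iff.2 hS
  have hu_at : ∀ i < S.length, (S ++ R)[i]? = some (letterGen u
      (2 * ((P.length + i) / 4) + (P.length + i) % 2), decide ((P.length + i) % 4 < 2)) := by
    intro i hi
    rw [List.getElem?_append_left hi, ← getElem?_letterExp u (by omega), hu,
      List.getElem?_append_right (by omega)]
    simp
  have hv_at : ∀ i < 2, (letterExp G v ++ R')[i]? = some (letterGen v i, true) := by
    have := G.deg_pos v.1.2.1
    intro i hi
    rw [List.getElem?_append_left (by rw [length_letterExp]; omega),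
      getElem?_letterExp v (by omega)]
    interval_cases i <;> rfl
  -- Within two letters an interior position of `letterExp u` reads an inverse letter, or else the
  -- child `letterGen u (2j)` with `j > 0`, which no letter expansion starts with.
  have h0 := congrArg (·[0]?) h
  simp only [hu_at 0 hS0, hv_at 0 (by norm_num), Option.some.injEq, Prod.mk.injEq,
    decide_eq_true_eq] at h0
  rcases (by omega : P.length % 4 = 0 ∨ P.length % 4 = 1) with hr | hr
  · obtain ⟨-, hzero⟩ := eq_of_letterGen_eq (by omega) (G.deg_pos v.1.2.1) (by omega) h0.1
    omega
  · have h1 := congrArg (·[1]?) h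
    simp only [hu_at 1 (by omega), hv_at 1 (by norm_num), Option.some.injEq, Prod.mk.injEq,
      decide_eq_true_eq] at h1
    omega

theorem exists_append_of_wordExpStep_eq_append {U V : List (GropeGen G m × Bool)}
    {A C A' : List (GropeGen G (m + 1) × Bool)} (hU : wordExpStep G U = A ++ C)
    (hV : wordExpStep G V = C ++ A') (hC : C ≠ []) :
    ∃ U₁ U₂, U = U₁ ++ U₂ ∧ wordExpStep G U₁ = A ∧ wordExpStep G U₂ = C := by
  induction U generalizing A with
  | nil => exact absurd (List.append_eq_nil_iff.1 hU.symm).2 hC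
  | cons u T ih =>
    rw [wordExpStep_cons, List.append_eq_append_iff] at hU
    rcases hU with ⟨A₂, rfl, hT⟩ | ⟨S, hu, rfl⟩
    · obtain ⟨U₁, U₂, rfl, h₁, h₂⟩ := ih hT
      exact ⟨u :: U₁, U₂, rfl, by rw [wordExpStep_cons, h₁], h₂⟩
    rcases eq_or_ne A [] with rfl | hA
    · exact ⟨[], u :: T, rfl, rfl, by rw [wordExpStep_cons, hu, List.nil_append]⟩
    rcases eq_or_ne S [] with rfl | hS
    · exact ⟨[u], T, rfl, by simpa [wordExpStep_cons] using hu, by simp⟩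
    obtain _ | ⟨v, V⟩ := V
    · simp [hS] at hV
    · rw [wordExpStep_cons, List.append_assoc] at hV
      exact absurd hV.symm (append_ne_letterExp_append hu hA hS)

end Expansion

section Levels

variable {G : GropeFrame} {m n : ℕ}

theorem wordExp_self (h : m ≤ m) (w : List (GropeGen G m × Bool)) : wordExp G h w = w :=
  Nat.leRecOn_self (C := fun k => List (GropeGen G k × Bool)) w

theorem wordExp_succ (h : m ≤ n) (h' : m ≤ n + 1) (w : List (GropeGen G m × Bool)) :
    wordExp G h' w = wordExpStep G (wordExp G h w) :=
  Nat.leRecOn_succ (C := fun k => List (GropeGen G k × Bool)) h w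

theorem gropeEle_self (h : m ≤ m) (x : FreeGroup (GropeGen G m)) : gropeEle G h x = x :=
  Nat.leRecOn_self (C := fun k => FreeGroup (GropeGen G k)) x

theorem gropeEle_succ (h : m ≤ n) (h' : m ≤ n + 1) (x : FreeGroup (GropeGen G m)) :
    gropeEle G h' x = gropeE G n (gropeEle G h x) :=
  Nat.leRecOn_succ (C := fun k => FreeGroup (GropeGen G k)) h x

theorem mk_letterExp (a : GropeGen G m × Bool) : mk (letterExp G a) = gropeE G m (mk [a]) := by
  have hpos : ∀ c, mk (letterExp G (c, true)) = gropeE G m (of c) := fun c => by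
    rw [gropeE, FreeGroup.lift_apply_of, letterExp, if_pos rfl, FreeGroup.mk_flatten, List.map_ofFn]
    rfl
  obtain ⟨c, _ | _⟩ := a
  · rw [show letterExp G (c, false) = invRev (letterExp G (c, true)) from rfl, ← inv_mk, hpos,
      show mk [(c, false)] = (of c)⁻¹ from rfl, map_inv]
  · exact hpos c

theorem mk_wordExpStep (w : List (GropeGen G m × Bool)) :
    mk (wordExpStep G w) = gropeE G m (mk w) := by
  induction w with
  | nil => exact (map_one _).symm
  | cons a w ih =>
    rw [wordExpStep_cons, ← mul_mk, ih, mk_letterExp, ← map_mul, mul_mk, List.singleton_append]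

theorem mk_wordExp (h : m ≤ n) (w : List (GropeGen G m × Bool)) :
    mk (wordExp G h w) = gropeEle G h (mk w) := by
  induction n, h using Nat.le_induction with
  | base => rw [wordExp_self, gropeEle_self]
  | succ n h ih => rw [wordExp_succ h, gropeEle_succ h, mk_wordExpStep, ih]

theorem isReduced_wordExp (h : m ≤ n) {w : List (GropeGen G m × Bool)}
    (hw : FreeGroup.IsReduced w) : FreeGroup.IsReduced (wordExp G h w) := by
  induction n, h using Nat.le_induction with
  | base => rwa [wordExp_self]
  | succ n h ih => rw [wordExp_succ h]; exact isReduced_wordExpStep ih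

theorem exists_wordExp_eq_of_wordExp_eq_append_swap (h : m ≤ n)
    {A C : List (GropeGen G n × Bool)} {W W' : List (GropeGen G m × Bool)} (hA : A ≠ [])
    (hC : C ≠ []) (hW : wordExp G h W = A ++ C) (hW' : wordExp G h W' = C ++ A) :
    (∃ W₁, wordExp G h W₁ = A) ∧ ∃ W₂, wordExp G h W₂ = C := by
  induction n, h using Nat.le_induction with
  | base => exact ⟨⟨A, wordExp_self _ _⟩, ⟨C, wordExp_self _ _⟩⟩
  | succ n h ih =>
    rw [wordExp_succ h] at hW hW'
    obtain ⟨U₁, U₂, hU, hU₁, hU₂⟩ := exists_append_of_wordExpStep_eq_append hW hW' hC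
    obtain ⟨V₁, V₂, hV, hV₁, hV₂⟩ := exists_append_of_wordExpStep_eq_append hW' hW hA
    obtain rfl := wordExpStep_injective (hV₁.trans hU₂.symm)
    obtain rfl := wordExpStep_injective (hV₂.trans hU₁.symm)
    obtain ⟨⟨W₁, hW₁⟩, ⟨W₂, hW₂⟩⟩ :=
      ih (by rintro rfl; exact hA hU₁.symm) (by rintro rfl; exact hC hU₂.symm) hU hV
    exact ⟨⟨W₁, by rw [wordExp_succ h, hW₁, hU₁]⟩,
      ⟨W₂, by rw [wordExp_succ h, hW₂, hU₂]⟩⟩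

theorem exists_monoidHom_coe_eq_gropeEle (h : m ≤ n) :
    ∃ φ : FreeGroup (GropeGen G m) →* FreeGroup (GropeGen G n), ⇑φ = gropeEle G h := by
  induction n, h using Nat.le_induction with
  | base => exact ⟨MonoidHom.id _, funext fun x => (gropeEle_self _ x).symm⟩
  | succ n h ih =>
    obtain ⟨φ, hφ⟩ := ih
    exact ⟨(gropeE G n).comp φ, funext fun x => by rw [gropeEle_succ h, ← hφ]; rfl⟩

theorem MemF.mul {g g' : FreeGroup (GropeGen G n)} (hg : MemF G m g) (hg' : MemF G m g') :
    MemF G m (g * g') := by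
  obtain ⟨h, x, rfl⟩ := hg
  obtain ⟨-, y, rfl⟩ := hg'
  obtain ⟨φ, hφ⟩ := exists_monoidHom_coe_eq_gropeEle (G := G) h
  exact ⟨h, x * y, by rw [← hφ, map_mul]⟩

theorem MemF.inv {g : FreeGroup (GropeGen G n)} (hg : MemF G m g) : MemF G m g⁻¹ := by
  obtain ⟨h, x, rfl⟩ := hg
  obtain ⟨φ, hφ⟩ := exists_monoidHom_coe_eq_gropeEle (G := G) h
  exact ⟨h, x⁻¹, by rw [← hφ, map_inv]⟩

theorem MemF.mk_append {X Y : List (GropeGen G n × Bool)} (hX : MemF G m (mk X))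
    (hY : MemF G m (mk Y)) : MemF G m (mk (X ++ Y)) := by
  rw [← mul_mk]
  exact hX.mul hY

theorem MemF.mk_invRev {X : List (GropeGen G n × Bool)} (hX : MemF G m (mk X)) :
    MemF G m (mk (invRev X)) := by
  rw [← inv_mk]
  exact hX.inv

theorem MemF.mk_append_and_invRev_append {X Y : List (GropeGen G n × Bool)}
    (hX : MemF G m (mk X)) (hY : MemF G m (mk Y)) :
    MemF G m (mk (X ++ Y)) ∧ MemF G m (mk (invRev X ++ invRev Y)) :=
  ⟨hX.mk_append hY, hX.mk_invRev.mk_append hY.mk_invRev⟩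

theorem exists_wordExp_eq_of_memF (h : m ≤ n) {L : List (GropeGen G n × Bool)}
    (hmem : MemF G m (mk L)) (hL : FreeGroup.IsReduced L) : ∃ W, wordExp G h W = L := by
  classical
  obtain ⟨_, x, hx⟩ := hmem
  refine ⟨x.toWord, ?_⟩
  have hW := congrArg FreeGroup.toWord
    (show mk (wordExp G h x.toWord) = mk L by rw [mk_wordExp, FreeGroup.mk_toWord, hx])
  rwa [FreeGroup.toWord_mk, FreeGroup.toWord_mk, hL.reduce_eq,
    (isReduced_wordExp h FreeGroup.isReduced_toWord).reduce_eq] at hW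

theorem MemF.of_mk_append_swap {X Y : List (GropeGen G n × Bool)} (hX : X ≠ []) (hY : Y ≠ [])
    (hXY : FreeGroup.IsReduced (X ++ Y)) (hYX : FreeGroup.IsReduced (Y ++ X))
    (h₁ : MemF G m (mk (X ++ Y))) (h₂ : MemF G m (mk (Y ++ X))) :
    MemF G m (mk X) ∧ MemF G m (mk Y) := by
  have h : m ≤ n := h₁.fst
  obtain ⟨W, hW⟩ := exists_wordExp_eq_of_memF h h₁ hXY
  obtain ⟨W', hW'⟩ := exists_wordExp_eq_of_memF h h₂ hYX
  obtain ⟨⟨W₁, rfl⟩, ⟨W₂, rfl⟩⟩ :=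
    exists_wordExp_eq_of_wordExp_eq_append_swap h hX hY hW hW'
  exact ⟨⟨h, mk W₁, (mk_wordExp h W₁).symm⟩, ⟨h, mk W₂, (mk_wordExp h W₂).symm⟩⟩

end Levels

theorem induction1_general (G : GropeFrame) {m n : ℕ}
    (A B : List (GropeGen G n × Bool)) (hA : A ≠ []) (hB : B ≠ [])
    (hAred : IsReducedWord A) (hBred : IsReducedWord B)
    (hne : FreeGroup.mk (A ++ B ++ wordInv A ++ wordInv B) ≠ 1)
    (hred1 : IsReducedWord (A ++ B)) (hred2 : IsReducedWord (wordInv A ++ wordInv B)) :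
    -- (1.1)
    (∀ B₀, B = B₀ ++ A →
      B₀ ≠ [] ∧ IsReducedWord (A ++ B₀) ∧ IsReducedWord (wordInv A ++ wordInv B₀) ∧
      FreeGroup.mk (A ++ B₀ ++ wordInv A ++ wordInv B₀) =
        FreeGroup.mk (A ++ B ++ wordInv A ++ wordInv B) ∧
      (MemF G m (FreeGroup.mk (A ++ B₀)) → MemF G m (FreeGroup.mk (wordInv A ++ wordInv B₀)) →
        MemF G m (FreeGroup.mk (A ++ B)) ∧ MemF G m (FreeGroup.mk (wordInv A ++ wordInv B)))) ∧
    -- (1.2)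
    (∀ A₀, A = A₀ ++ B →
      A₀ ≠ [] ∧ IsReducedWord (A₀ ++ B) ∧ IsReducedWord (wordInv A₀ ++ wordInv B) ∧
      FreeGroup.mk (A₀ ++ B ++ wordInv A₀ ++ wordInv B) =
        FreeGroup.mk (A ++ B ++ wordInv A ++ wordInv B) ∧
      (MemF G m (FreeGroup.mk (A₀ ++ B)) → MemF G m (FreeGroup.mk (wordInv A₀ ++ wordInv B)) →
        MemF G m (FreeGroup.mk (A ++ B)) ∧ MemF G m (FreeGroup.mk (wordInv A ++ wordInv B)))) ∧
    -- (1.3)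
    (∀ A₀ B₀ Z, A = A₀ ++ Z → B = B₀ ++ Z → A₀ ≠ [] → B₀ ≠ [] →
      IsReducedWord (B₀ ++ wordInv A₀) →
      IsReducedWord (A₀ ++ Z ++ B₀ ++ wordInv A₀ ++ wordInv Z ++ wordInv B₀) ∧
      FreeGroup.mk (A₀ ++ Z ++ B₀ ++ wordInv A₀ ++ wordInv Z ++ wordInv B₀) =
        FreeGroup.mk (A ++ B ++ wordInv A ++ wordInv B) ∧
      (MemF G m (FreeGroup.mk A₀) → MemF G m (FreeGroup.mk B₀) → MemF G m (FreeGroup.mk Z) →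
        MemF G m (FreeGroup.mk (A ++ B)) ∧ MemF G m (FreeGroup.mk (wordInv A ++ wordInv B)))) := by
  simp only [isReducedWord_iff_isReduced, wordInv_eq_invRev] at *
  refine ⟨?_, ?_, ?_⟩
  · rintro B₀ rfl
    have hB₀ : B₀ ≠ [] := by
      rintro rfl
      exact hne (by rw [List.nil_append, mk_commutatorWord, commutatorElement_self])
    have hAB₀ : FreeGroup.IsReduced (A ++ B₀) := hred1.infix ⟨[], A, by simp⟩
    refine ⟨hB₀, hAB₀, by rwa [← FreeGroup.invRev_append, FreeGroup.isReduced_invRev_iff],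
      by simp only [← mul_mk, ← inv_mk]; group, fun h₁ h₂ => ?_⟩
    have hB₀A : MemF G m (mk (B₀ ++ A)) := by
      simpa [FreeGroup.invRev_append, FreeGroup.invRev_invRev] using h₂.mk_invRev
    exact (h₁.of_mk_append_swap hA hB₀ hAB₀ hBred hB₀A).1.mk_append_and_invRev_append hB₀A
  · rintro A₀ rfl
    have hA₀ : A₀ ≠ [] := by
      rintro rfl
      exact hne (by rw [List.nil_append, mk_commutatorWord, commutatorElement_self])
    have hBA₀ : FreeGroup.IsReduced (B ++ A₀) := by
      rw [← FreeGroup.invRev_append, FreeGroup.isReduced_invRev_iff] at hred2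
      exact hred2.infix ⟨[], B, by simp⟩
    refine ⟨hA₀, hAred, by rwa [← FreeGroup.invRev_append, FreeGroup.isReduced_invRev_iff],
      by simp only [← mul_mk, ← inv_mk]; group, fun h₁ h₂ => ?_⟩
    have hBA₀' : MemF G m (mk (B ++ A₀)) := by
      simpa [FreeGroup.invRev_append, FreeGroup.invRev_invRev] using h₂.mk_invRev
    exact h₁.mk_append_and_invRev_append (h₁.of_mk_append_swap hA₀ hB hAred hBA₀ hBA₀').2
  · rintro A₀ B₀ Z rfl rfl hA₀ hB₀ hB₀A₀
    exact ⟨isReduced_commutatorWord_of_common_suffix hred1 hred2 hB₀A₀ hA₀ hB₀,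
      by simp only [← mul_mk, ← inv_mk]; group,
      fun h₁ h₂ h₃ => (h₁.mk_append h₃).mk_append_and_invRev_append (h₂.mk_append h₃)⟩

/-- **Lemma 10 (induction1).** Let `m < n` and let `A, B ∈ 𝒲(E_n)` be non-empty reduced
words with `ABA⁻B⁻ ≠ e` such that `AB` and `A⁻B⁻` are reduced words. Then (1.1)–(1.3)
hold. -/
theorem induction1 (G : GropeFrame) {m n : ℕ} (hmn : m < n)
    (A B : List (GropeGen G n × Bool)) (hA : A ≠ []) (hB : B ≠ [])
    (hAred : IsReducedWord A) (hBred : IsReducedWord B)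
    (hne : FreeGroup.mk (A ++ B ++ wordInv A ++ wordInv B) ≠ 1)
    (hred1 : IsReducedWord (A ++ B)) (hred2 : IsReducedWord (wordInv A ++ wordInv B)) :
    -- (1.1)
    (∀ B₀, B = B₀ ++ A →
      B₀ ≠ [] ∧ IsReducedWord (A ++ B₀) ∧ IsReducedWord (wordInv A ++ wordInv B₀) ∧
      FreeGroup.mk (A ++ B₀ ++ wordInv A ++ wordInv B₀) =
        FreeGroup.mk (A ++ B ++ wordInv A ++ wordInv B) ∧
      (MemF G m (FreeGroup.mk (A ++ B₀)) → MemF G m (FreeGroup.mk (wordInv A ++ wordInv B₀)) →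
        MemF G m (FreeGroup.mk (A ++ B)) ∧ MemF G m (FreeGroup.mk (wordInv A ++ wordInv B)))) ∧
    -- (1.2)
    (∀ A₀, A = A₀ ++ B →
      A₀ ≠ [] ∧ IsReducedWord (A₀ ++ B) ∧ IsReducedWord (wordInv A₀ ++ wordInv B) ∧
      FreeGroup.mk (A₀ ++ B ++ wordInv A₀ ++ wordInv B) =
        FreeGroup.mk (A ++ B ++ wordInv A ++ wordInv B) ∧
      (MemF G m (FreeGroup.mk (A₀ ++ B)) → MemF G m (FreeGroup.mk (wordInv A₀ ++ wordInv B)) →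
        MemF G m (FreeGroup.mk (A ++ B)) ∧ MemF G m (FreeGroup.mk (wordInv A ++ wordInv B)))) ∧
    -- (1.3)
    (∀ A₀ B₀ Z, A = A₀ ++ Z → B = B₀ ++ Z → A₀ ≠ [] → B₀ ≠ [] →
      IsReducedWord (B₀ ++ wordInv A₀) →
      IsReducedWord (A₀ ++ Z ++ B₀ ++ wordInv A₀ ++ wordInv Z ++ wordInv B₀) ∧
      FreeGroup.mk (A₀ ++ Z ++ B₀ ++ wordInv A₀ ++ wordInv Z ++ wordInv B₀) =
        FreeGroup.mk (A ++ B ++ wordInv A ++ wordInv B) ∧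
      (MemF G m (FreeGroup.mk A₀) → MemF G m (FreeGroup.mk B₀) → MemF G m (FreeGroup.mk Z) →
        MemF G m (FreeGroup.mk (A ++ B)) ∧ MemF G m (FreeGroup.mk (wordInv A ++ wordInv B)))) :=
  induction1_general G A B hA hB hAred hBred hne hred1 hred2
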